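/- arXiv:2206.15203 — 2 statements merged into one kernel-verified Lean document; each statement's English description precedes it below -/
import Mathlib

section
/- For every r ∈ ℝ, the per-region goodput G is twice differentiable at r and its second derivative equals G″(r) = 2·∫_φ^{φ'} H(γ, r) dγ + r·∫_φ^{φ'} H(γ, r)·n·(C(γ) − r)/V(γ) dγ. -/
open MeasureTheory intervalIntegral Real Filter Topology

/-- Gaussian Q-function: Q(t) = (1/√(2π)) ∫_t^∞ exp(−u²/2) du. -/
noncomputable def Qfun (t : ℝ) : ℝ :=
  (Real.sqrt (2 * Real.pi))⁻¹ * ∫ u in Set.Ioi t, Real.exp (-u ^ 2 / 2)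

/-- Capacity C(γ) = log(1 + P γ) (natural log). -/
noncomputable def Cap (P γ : ℝ) : ℝ := Real.log (1 + P * γ)

/-- Channel dispersion V(γ) = 1 − 1/(1 + P γ)². -/
noncomputable def Vdisp (P γ : ℝ) : ℝ := 1 - 1 / (1 + P * γ) ^ 2

/-- Codeword error probability Ω(γ, r) = Q((C(γ) − r)·√(n/V(γ))). -/
noncomputable def Omega (n P γ r : ℝ) : ℝ :=
  Qfun ((Cap P γ - r) * Real.sqrt (n / Vdisp P γ))

/-- H(γ, r) = −(1/√(2π))·exp(−n(C(γ)−r)²/(2V(γ)))·f(γ)·√(n/V(γ)). -/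
noncomputable def Hfun (n P : ℝ) (f : ℝ → ℝ) (γ r : ℝ) : ℝ :=
  -(Real.sqrt (2 * Real.pi))⁻¹ * Real.exp (-(n * (Cap P γ - r) ^ 2) / (2 * Vdisp P γ)) *
    f γ * Real.sqrt (n / Vdisp P γ)


/-!
Differentiation under the integral sign. On `[φ, φ']`, which stays away from `γ = 0` where `V`
vanishes, the integrand `f (1 - Ω)` and its `r`-derivatives are jointly continuous, hence bounded
on `[φ, φ'] × [r - 1, r + 1]`, so both `r`-derivatives of `I(r) = ∫ f (1 - Ω)` may be taken inside
the integral. As `Q'` is minus the standard Gaussian density, `∂ᵣ (f (1 - Ω)) = H`, and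
`∂ᵣ H = H · n (C - r) / V`; the product rule then gives `(r I)'' = 2 I' + r I''`.
-/

open Set Function
open scoped Interval

section ParametricIntegral

variable {E : Type*} [NormedAddCommGroup E] [NormedSpace ℝ E]

theorem hasDerivAt_integral_Ioi [CompleteSpace E] {g : ℝ → E} {t : ℝ} (hg : Integrable g)
    (hgt : ContinuousAt g t) : HasDerivAt (fun t => ∫ u in Ioi t, g u) (-g t) t := by
  have hsplit : ∀ s, ∫ u in Ioi s, g u = (∫ u in Ioi 0, g u) - ∫ u in 0..s, g u := fun s => by
    rw [← integral_Ioi_sub_Ioi' hg.integrableOn hg.integrableOn, sub_sub_cancel]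
  rw [funext hsplit]
  exact (integral_hasDerivAt_right hg.intervalIntegrable
    hg.aestronglyMeasurable.stronglyMeasurableAtFilter hgt).const_sub _

theorem hasDerivAt_intervalIntegral_of_continuousOn {g g' : ℝ → ℝ → E} {a b : ℝ}
    (hg : ContinuousOn (uncurry g) (uIcc a b ×ˢ univ))
    (hg' : ContinuousOn (uncurry g') (uIcc a b ×ˢ univ))
    (hd : ∀ γ ∈ uIcc a b, ∀ r, HasDerivAt (g γ) (g' γ r) r) (r : ℝ) :
    HasDerivAt (fun r => ∫ γ in a..b, g γ r) (∫ γ in a..b, g' γ r) r := by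
  have slice : ∀ {h : ℝ → ℝ → E}, ContinuousOn (uncurry h) (uIcc a b ×ˢ univ) →
      ∀ x, ContinuousOn (fun γ => h γ x) (uIcc a b) := fun hh x =>
    hh.comp (continuous_id.prodMk continuous_const).continuousOn fun γ hγ => ⟨hγ, mem_univ x⟩
  have slice_aestronglyMeasurable : ∀ {h : ℝ → ℝ → E},
      ContinuousOn (uncurry h) (uIcc a b ×ˢ univ) →
      ∀ x, AEStronglyMeasurable (fun γ => h γ x) (volume.restrict (Ι a b)) := fun hh x =>
    ((slice hh x).mono uIoc_subset_uIcc).aestronglyMeasurable measurableSet_uIoc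
  obtain ⟨M, hM⟩ := (isCompact_uIcc.prod (isCompact_closedBall r 1)).exists_bound_of_continuousOn
    (hg'.mono (prod_mono subset_rfl (subset_univ _)))
  exact (hasDerivAt_integral_of_dominated_loc_of_deriv_le (bound := fun _ => M)
    (Metric.closedBall_mem_nhds r one_pos) (.of_forall (slice_aestronglyMeasurable hg))
    (slice hg r).intervalIntegrable (slice_aestronglyMeasurable hg' r)
    (.of_forall fun γ hγ x hx => hM (γ, x) ⟨uIoc_subset_uIcc hγ, hx⟩) intervalIntegrable_const
    (.of_forall fun γ hγ x _ => hd γ (uIoc_subset_uIcc hγ) x)).2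

end ParametricIntegral

section SecondDerivative

variable {𝕜 : Type*} [NontriviallyNormedField 𝕜] {I J : 𝕜 → 𝕜}

theorem deriv_id_mul_eq (hI : ∀ x, HasDerivAt I (J x) x) :
    deriv (fun x => x * I x) = fun x => I x + x * J x :=
  funext fun x => by simpa using ((hasDerivAt_id' x).fun_mul (hI x)).deriv

theorem hasDerivAt_deriv_id_mul {K r : 𝕜} (hI : ∀ x, HasDerivAt I (J x) x)
    (hJ : HasDerivAt J K r) :
    HasDerivAt (deriv fun x => x * I x) (2 * J r + r * K) r := by
  rw [deriv_id_mul_eq hI]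
  refine ((hI r).fun_add ((hasDerivAt_id' r).fun_mul hJ)).congr_deriv ?_
  ring

end SecondDerivative

theorem hasDerivAt_Qfun (t : ℝ) :
    HasDerivAt Qfun (-(√(2 * π))⁻¹ * exp (-t ^ 2 / 2)) t := by
  have hgauss : Integrable fun u : ℝ => exp (-u ^ 2 / 2) := by
    simpa [div_eq_inv_mul] using integrable_exp_neg_mul_sq (by norm_num : (0 : ℝ) < 2⁻¹)
  refine ((hasDerivAt_integral_Ioi hgauss
    (by fun_prop : Continuous fun u : ℝ => exp (-u ^ 2 / 2)).continuousAt).const_mul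
      (√(2 * π))⁻¹).congr_deriv ?_
  ring

@[fun_prop]
theorem continuous_Qfun : Continuous Qfun :=
  continuous_iff_continuousAt.2 fun t => (hasDerivAt_Qfun t).continuousAt

section Channel

variable {n P : ℝ} {f : ℝ → ℝ}

theorem Vdisp_pos (hP : 0 < P) {γ : ℝ} (hγ : 0 < γ) : 0 < Vdisp P γ := by
  have h : 1 < (1 + P * γ) ^ 2 := one_lt_pow₀ (by nlinarith) two_ne_zero
  rw [Vdisp, sub_pos, div_lt_one (by positivity)]
  exact h

theorem hasDerivAt_Omega (hn : 0 < n) (hP : 0 < P) {γ : ℝ} (hγ : 0 < γ) (r : ℝ) :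
    HasDerivAt (Omega n P γ)
      ((√(2 * π))⁻¹ * exp (-(n * (Cap P γ - r) ^ 2) / (2 * Vdisp P γ)) * √(n / Vdisp P γ)) r := by
  have hV := Vdisp_pos hP hγ
  have hs : √(n / Vdisp P γ) ^ 2 = n / Vdisp P γ := sq_sqrt (div_pos hn hV).le
  refine ((hasDerivAt_Qfun _).comp r
    (((hasDerivAt_id' r).const_sub (Cap P γ)).mul_const √(n / Vdisp P γ))).congr_deriv ?_
  rw [mul_pow, hs]
  field_simp

theorem hasDerivAt_mul_one_sub_Omega (hn : 0 < n) (hP : 0 < P) {γ : ℝ} (hγ : 0 < γ) (r : ℝ) :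
    HasDerivAt (fun r => f γ * (1 - Omega n P γ r)) (Hfun n P f γ r) r := by
  refine (((hasDerivAt_Omega hn hP hγ r).const_sub 1).const_mul (f γ)).congr_deriv ?_
  rw [Hfun]
  ring

theorem hasDerivAt_Hfun (γ r : ℝ) :
    HasDerivAt (Hfun n P f γ) (Hfun n P f γ r * (n * (Cap P γ - r) / Vdisp P γ)) r := by
  have hE : HasDerivAt (fun r => -(n * (Cap P γ - r) ^ 2) / (2 * Vdisp P γ))
      (n * (Cap P γ - r) / Vdisp P γ) r := by
    refine ((((hasDerivAt_id' r).const_sub (Cap P γ)).pow 2).const_mul n).neg.div_const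
      (2 * Vdisp P γ) |>.congr_deriv ?_
    ring
  refine ((hE.exp.const_mul (-(√(2 * π))⁻¹)).mul_const (f γ)).mul_const √(n / Vdisp P γ)
    |>.congr_deriv ?_
  unfold Hfun
  ring

theorem continuousAt_mul_one_sub_Omega (hP : 0 < P) (hf : Continuous f) {p : ℝ × ℝ}
    (hp : 0 < p.1) : ContinuousAt (uncurry fun γ r => f γ * (1 - Omega n P γ r)) p := by
  have hV : Vdisp P p.1 ≠ 0 := (Vdisp_pos hP hp).ne'
  unfold Omega Cap
  unfold Vdisp at hV ⊢
  fun_prop (disch := first | assumption | positivity)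

theorem continuousAt_Hfun (hP : 0 < P) (hf : Continuous f) {p : ℝ × ℝ} (hp : 0 < p.1) :
    ContinuousAt (uncurry (Hfun n P f)) p := by
  have hV : Vdisp P p.1 ≠ 0 := (Vdisp_pos hP hp).ne'
  unfold Hfun Cap
  unfold Vdisp at hV ⊢
  fun_prop (disch := first | assumption | positivity)

theorem continuousAt_Hfun_mul (hP : 0 < P) (hf : Continuous f) {p : ℝ × ℝ} (hp : 0 < p.1) :
    ContinuousAt (uncurry fun γ r => Hfun n P f γ r * (n * (Cap P γ - r) / Vdisp P γ)) p := by
  have hV : Vdisp P p.1 ≠ 0 := (Vdisp_pos hP hp).ne'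
  have hC : ContinuousAt (fun p : ℝ × ℝ => Cap P p.1) p := by
    unfold Cap; fun_prop (disch := positivity)
  have hVc : ContinuousAt (fun p : ℝ × ℝ => Vdisp P p.1) p := by
    unfold Vdisp; fun_prop (disch := positivity)
  exact (continuousAt_Hfun hP hf hp).mul
    ((continuousAt_const.mul (hC.sub continuousAt_snd)).div hVc hV)

end Channel

theorem goodput_second_deriv_general (n P : ℝ) (hn : 0 < n) (hP : 0 < P)
    (f : ℝ → ℝ) (hf : Continuous f)
    (φ φ' : ℝ) (hφ : 0 < φ) (hφφ' : φ < φ') (r : ℝ) :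
    DifferentiableAt ℝ (fun r : ℝ => r * ∫ γ in φ..φ', f γ * (1 - Omega n P γ r)) r ∧
    DifferentiableAt ℝ
      (deriv (fun r : ℝ => r * ∫ γ in φ..φ', f γ * (1 - Omega n P γ r))) r ∧
    deriv (deriv (fun r : ℝ => r * ∫ γ in φ..φ', f γ * (1 - Omega n P γ r))) r =
      2 * (∫ γ in φ..φ', Hfun n P f γ r) +
        r * ∫ γ in φ..φ', Hfun n P f γ r * (n * (Cap P γ - r) / Vdisp P γ) := by
  have hpos : ∀ γ ∈ uIcc φ φ', 0 < γ := fun γ hγ => hφ.trans_le (uIcc_of_le hφφ'.le ▸ hγ).1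
  have hI : ∀ r, HasDerivAt (fun r => ∫ γ in φ..φ', f γ * (1 - Omega n P γ r))
      (∫ γ in φ..φ', Hfun n P f γ r) r :=
    hasDerivAt_intervalIntegral_of_continuousOn
      (continuousOn_of_forall_continuousAt fun p hp =>
        continuousAt_mul_one_sub_Omega hP hf (hpos p.1 hp.1))
      (continuousOn_of_forall_continuousAt fun p hp => continuousAt_Hfun hP hf (hpos p.1 hp.1))
      fun γ hγ => hasDerivAt_mul_one_sub_Omega hn hP (hpos γ hγ)
  have hJ : HasDerivAt (fun r => ∫ γ in φ..φ', Hfun n P f γ r)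
      (∫ γ in φ..φ', Hfun n P f γ r * (n * (Cap P γ - r) / Vdisp P γ)) r :=
    hasDerivAt_intervalIntegral_of_continuousOn
      (continuousOn_of_forall_continuousAt fun p hp => continuousAt_Hfun hP hf (hpos p.1 hp.1))
      (continuousOn_of_forall_continuousAt fun p hp =>
        continuousAt_Hfun_mul hP hf (hpos p.1 hp.1))
      (fun γ _ => hasDerivAt_Hfun γ) r
  have hG := hasDerivAt_deriv_id_mul hI hJ
  exact ⟨differentiableAt_id.mul (hI r).differentiableAt, hG.differentiableAt, hG.deriv⟩

theorem goodput_second_deriv (n P : ℝ) (hn : 0 < n) (hP : 0 < P)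
    (f : ℝ → ℝ) (hf : Continuous f) (hfpos : ∀ γ : ℝ, 0 < γ → 0 < f γ)
    (φ φ' : ℝ) (hφ : 0 < φ) (hφφ' : φ < φ') (r : ℝ) :
    DifferentiableAt ℝ (fun r : ℝ => r * ∫ γ in φ..φ', f γ * (1 - Omega n P γ r)) r ∧
    DifferentiableAt ℝ
      (deriv (fun r : ℝ => r * ∫ γ in φ..φ', f γ * (1 - Omega n P γ r))) r ∧
    deriv (deriv (fun r : ℝ => r * ∫ γ in φ..φ', f γ * (1 - Omega n P γ r))) r =
      2 * (∫ γ in φ..φ', Hfun n P f γ r) +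
        r * ∫ γ in φ..φ', Hfun n P f γ r * (n * (Cap P γ - r) / Vdisp P γ) :=
  goodput_second_deriv_general n P hn hP f hf φ φ' hφ hφφ' r
end

section
/- (Theorem 2, exact form of the linearized goodput integral, Eq. (39)) For every φ < φ', the linearized success-probability integral evaluates exactly as ∫_φ^{φ'} f(γ)·(1 − Ω̃(γ)) dγ = ( F(min(Δ₂, φ')) − F(max(Δ₁, φ)) ) · u(φ' − Δ₁) · u(Δ₂ − φ) · ( 1/2 + b·(a − E) ) + ( F(φ') − F(max(Δ₂, φ)) ) · u(φ' − Δ₂), where E = ( ∫_{max(Δ₁,φ)}^{min(Δ₂,φ')} γ·f(γ) dγ ) / ( F(min(Δ₂, φ')) − F(max(Δ₁, φ)) ) is the truncated mean (with the convention that division by zero equals zero). -/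
open MeasureTheory intervalIntegral Real Filter Topology

/-- Linearization point a = (eʳ − 1)/P. -/
noncomputable def lina (P r : ℝ) : ℝ := (Real.exp r - 1) / P

/-- Linearization slope b = −P·√(n/(2π(e^{2r} − 1))). -/
noncomputable def linb (n P r : ℝ) : ℝ :=
  -P * Real.sqrt (n / (2 * Real.pi * (Real.exp (2 * r) - 1)))

/-- Piecewise-linear approximation Ω̃(γ) = min(1, max(0, 1/2 + b(γ − a))). -/
noncomputable def OmegaTilde (n P r γ : ℝ) : ℝ :=
  min 1 (max 0 (1 / 2 + linb n P r * (γ - lina P r)))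

/-- Unit step function. -/
noncomputable def ustep (x : ℝ) : ℝ := if 0 ≤ x then 1 else 0

set_option maxHeartbeats 1000000 in
theorem linearized_goodput_integral (n P r : ℝ) (hn : 0 < n) (hP : 0 < P) (hr : 0 < r)
    (f : ℝ → ℝ) (hf : Continuous f) (hfnn : ∀ x : ℝ, 0 ≤ f x)
    (φ φ' : ℝ) (hφφ' : φ < φ') :
    (∫ γ in φ..φ', f γ * (1 - OmegaTilde n P r γ)) =
      ((∫ t in (0:ℝ)..(min (lina P r - 1 / (2 * linb n P r)) φ'), f t) -
          ∫ t in (0:ℝ)..(max (lina P r + 1 / (2 * linb n P r)) φ), f t) *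
        ustep (φ' - (lina P r + 1 / (2 * linb n P r))) *
        ustep ((lina P r - 1 / (2 * linb n P r)) - φ) *
        (1 / 2 + linb n P r * (lina P r -
          (∫ γ in (max (lina P r + 1 / (2 * linb n P r)) φ)..(min (lina P r - 1 / (2 * linb n P r)) φ'),
              γ * f γ) /
            ((∫ t in (0:ℝ)..(min (lina P r - 1 / (2 * linb n P r)) φ'), f t) -
              ∫ t in (0:ℝ)..(max (lina P r + 1 / (2 * linb n P r)) φ), f t))) +
      ((∫ t in (0:ℝ)..φ', f t) -
          ∫ t in (0:ℝ)..(max (lina P r - 1 / (2 * linb n P r)) φ), f t) *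
        ustep (φ' - (lina P r - 1 / (2 * linb n P r))) := by

  have hpi := Real.pi_pos
  set a := lina P r with ha
  set b := linb n P r with hb
  have hbneg : b < 0 := by
    rw [hb, linb]
    have h1 : 1 < Real.exp (2 * r) := by
      rw [← Real.exp_zero]; exact Real.exp_lt_exp.mpr (by linarith)
    have h2 : 0 < n / (2 * Real.pi * (Real.exp (2 * r) - 1)) :=
      div_pos hn (by nlinarith)
    have h3 := Real.sqrt_pos.mpr h2
    nlinarith
  set d := 1 / (2 * b) with hdd
  have hdneg : d < 0 := by rw [hdd]; exact one_div_neg.mpr (by linarith)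
  have hbne : b ≠ 0 := ne_of_lt hbneg
  have hbd : b * d = 1 / 2 := by
    rw [hdd]
    field_simp
  have hOm1 : ∀ γ : ℝ, γ ≤ a + d → OmegaTilde n P r γ = 1 := by
    intro γ hγ
    unfold OmegaTilde
    rw [← ha, ← hb]
    have h1 : (1:ℝ) ≤ 1 / 2 + b * (γ - a) := by nlinarith
    rw [max_eq_right (by linarith), min_eq_left h1]
  have hOm2 : ∀ γ : ℝ, a + d ≤ γ → γ ≤ a - d → OmegaTilde n P r γ = 1 / 2 + b * (γ - a) := by
    intro γ h1 h2
    unfold OmegaTilde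
    rw [← ha, ← hb]
    have hl : (0:ℝ) ≤ 1 / 2 + b * (γ - a) := by nlinarith
    have hu : 1 / 2 + b * (γ - a) ≤ 1 := by nlinarith
    rw [max_eq_right hl, min_eq_right hu]
  have hOm3 : ∀ γ : ℝ, a - d ≤ γ → OmegaTilde n P r γ = 0 := by
    intro γ hγ
    unfold OmegaTilde
    rw [← ha, ← hb]
    have hu : 1 / 2 + b * (γ - a) ≤ 0 := by nlinarith
    rw [max_eq_left hu, min_eq_right (by norm_num)]
  have hOmc : Continuous (fun γ => OmegaTilde n P r γ) := by
    unfold OmegaTilde; fun_prop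
  have hg : Continuous (fun γ => f γ * (1 - OmegaTilde n P r γ)) := by fun_prop
  have hif : ∀ x y : ℝ, IntervalIntegrable f volume x y :=
    fun x y => hf.intervalIntegrable x y
  have hig : ∀ x y : ℝ, IntervalIntegrable (fun γ => f γ * (1 - OmegaTilde n P r γ)) volume x y :=
    fun x y => hg.intervalIntegrable x y
  have hust1 : ∀ x : ℝ, 0 ≤ x → ustep x = 1 := by intro x hx; unfold ustep; rw [if_pos hx]
  have hust0 : ∀ x : ℝ, x < 0 → ustep x = 0 := by
    intro x hx; unfold ustep; rw [if_neg (not_le.mpr hx)]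
  by_cases hc1 : a + d ≤ φ'
  · by_cases hc2 : φ ≤ a - d
    · -- main case
      set t1 := max (a + d) φ with ht1
      set t2 := min (a - d) φ' with ht2
      have h_t1t2 : t1 ≤ t2 :=
        max_le (le_min (by linarith) hc1) (le_min hc2 hφφ'.le)
      have hφt1 : φ ≤ t1 := le_max_right _ _
      have ht2φ' : t2 ≤ φ' := min_le_right _ _
      have hΔ1t1 : a + d ≤ t1 := le_max_left _ _
      have ht2Δ2 : t2 ≤ a - d := min_le_left _ _
      have hu1 : ustep (φ' - (a + d)) = 1 := hust1 _ (by linarith)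
      have hu2 : ustep (a - d - φ) = 1 := hust1 _ (by linarith)
      -- split LHS
      have hsp2 : (∫ γ in t1..t2, f γ * (1 - OmegaTilde n P r γ)) +
          (∫ γ in t2..φ', f γ * (1 - OmegaTilde n P r γ)) =
          ∫ γ in t1..φ', f γ * (1 - OmegaTilde n P r γ) :=
        intervalIntegral.integral_add_adjacent_intervals (hig _ _) (hig _ _)
      have hsp1 : (∫ γ in φ..t1, f γ * (1 - OmegaTilde n P r γ)) +
          (∫ γ in t1..φ', f γ * (1 - OmegaTilde n P r γ)) =
          ∫ γ in φ..φ', f γ * (1 - OmegaTilde n P r γ) :=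
        intervalIntegral.integral_add_adjacent_intervals (hig _ _) (hig _ _)
      have hpart1 : (∫ γ in φ..t1, f γ * (1 - OmegaTilde n P r γ)) = 0 := by
        rcases le_or_gt φ (a + d) with h | h
        · have he : t1 = a + d := max_eq_left h
          rw [intervalIntegral.integral_congr (g := fun _ => (0:ℝ)) ?_,
            intervalIntegral.integral_zero]
          intro γ hγ
          rw [Set.uIcc_of_le hφt1, he] at hγ
          show f γ * (1 - OmegaTilde n P r γ) = 0
          rw [hOm1 γ hγ.2]; ring
        · have he : t1 = φ := max_eq_right h.le
          rw [he, intervalIntegral.integral_same]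
      have hpart2 : (∫ γ in t1..t2, f γ * (1 - OmegaTilde n P r γ)) =
          ∫ γ in t1..t2, f γ * (1 / 2 - b * (γ - a)) := by
        apply intervalIntegral.integral_congr
        intro γ hγ
        rw [Set.uIcc_of_le h_t1t2] at hγ
        show f γ * (1 - OmegaTilde n P r γ) = f γ * (1 / 2 - b * (γ - a))
        rw [hOm2 γ (le_trans hΔ1t1 hγ.1) (le_trans hγ.2 ht2Δ2)]; ring
      have hFd : (∫ t in (0:ℝ)..t2, f t) - (∫ t in (0:ℝ)..t1, f t) = ∫ γ in t1..t2, f γ :=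
        intervalIntegral.integral_interval_sub_left (hif 0 t2) (hif 0 t1)
      have key : (∫ γ in t1..t2, f γ * (1 / 2 - b * (γ - a))) =
          (∫ γ in t1..t2, f γ) *
            (1 / 2 + b * (a - (∫ γ in t1..t2, γ * f γ) / (∫ γ in t1..t2, f γ))) := by
        have expand : (∫ γ in t1..t2, f γ * (1 / 2 - b * (γ - a))) =
            (1 / 2 + b * a) * (∫ γ in t1..t2, f γ) - b * (∫ γ in t1..t2, γ * f γ) := by
          have e : (fun γ => f γ * (1 / 2 - b * (γ - a))) =
              fun γ => (1 / 2 + b * a) * f γ - b * (γ * f γ) := by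
            funext γ; ring
          have hi1 : IntervalIntegrable (fun γ => (1 / 2 + b * a) * f γ) volume t1 t2 := by
            apply Continuous.intervalIntegrable; fun_prop
          have hi2 : IntervalIntegrable (fun γ => b * (γ * f γ)) volume t1 t2 := by
            apply Continuous.intervalIntegrable; fun_prop
          rw [e, intervalIntegral.integral_sub hi1 hi2,
            intervalIntegral.integral_const_mul, intervalIntegral.integral_const_mul]
        by_cases hM0 : (∫ γ in t1..t2, f γ) = 0
        · rw [hM0, zero_mul]
          have low : 0 ≤ ∫ γ in t1..t2, f γ * (1 / 2 - b * (γ - a)) := by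
            apply intervalIntegral.integral_nonneg h_t1t2
            intro γ hγ
            have h1 : a + d ≤ γ := le_trans hΔ1t1 hγ.1
            have hfac : 0 ≤ 1 / 2 - b * (γ - a) := by nlinarith
            exact mul_nonneg (hfnn γ) hfac
          have up : (∫ γ in t1..t2, f γ * (1 / 2 - b * (γ - a))) ≤ ∫ γ in t1..t2, f γ := by
            apply intervalIntegral.integral_mono_on h_t1t2
              ((hf.mul (by fun_prop)).intervalIntegrable _ _) (hif _ _)
            intro γ hγ
            have h2 : γ ≤ a - d := le_trans hγ.2 ht2Δ2
            have hfac : 1 / 2 - b * (γ - a) ≤ 1 := by nlinarith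
            calc f γ * (1 / 2 - b * (γ - a)) ≤ f γ * 1 :=
                  mul_le_mul_of_nonneg_left hfac (hfnn γ)
              _ = f γ := mul_one _
          rw [hM0] at up
          linarith
        · rw [expand]
          field_simp
          ring
      rcases le_or_gt (a - d) φ' with h | h
      · -- second term active
        have he2 : t2 = a - d := min_eq_left h
        have hu3 : ustep (φ' - (a - d)) = 1 := hust1 _ (by linarith)
        have hmax2 : max (a - d) φ = a - d := max_eq_left hc2
        have hpart3 : (∫ γ in t2..φ', f γ * (1 - OmegaTilde n P r γ)) =
            ∫ γ in t2..φ', f γ := by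
          apply intervalIntegral.integral_congr
          intro γ hγ
          rw [Set.uIcc_of_le ht2φ'] at hγ
          show f γ * (1 - OmegaTilde n P r γ) = f γ
          rw [hOm3 γ (he2 ▸ hγ.1)]; ring
        have hFd2 : (∫ t in (0:ℝ)..φ', f t) - (∫ t in (0:ℝ)..(a - d), f t) =
            ∫ γ in (a - d)..φ', f γ :=
          intervalIntegral.integral_interval_sub_left (hif 0 φ') (hif 0 (a - d))
        rw [← hsp1, ← hsp2, hpart1, hpart2, hpart3, hu1, hu2, hu3, hmax2, hFd, hFd2, key, he2]
        ring
      · -- second term vanishes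
        have he2 : t2 = φ' := min_eq_right h.le
        have hu3 : ustep (φ' - (a - d)) = 0 := hust0 _ (by linarith)
        have hpart3 : (∫ γ in t2..φ', f γ * (1 - OmegaTilde n P r γ)) = 0 := by
          rw [he2, intervalIntegral.integral_same]
        rw [← hsp1, ← hsp2, hpart1, hpart2, hpart3, hu1, hu2, hu3, hFd, key]
        ring
    · -- φ > a - d : everything right of Δ₂
      push_neg at hc2
      have hu2 : ustep (a - d - φ) = 0 := hust0 _ (by linarith)
      have hu3 : ustep (φ' - (a - d)) = 1 := hust1 _ (by linarith)
      have hmax2 : max (a - d) φ = φ := max_eq_right hc2.le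
      have hL : (∫ γ in φ..φ', f γ * (1 - OmegaTilde n P r γ)) = ∫ γ in φ..φ', f γ := by
        apply intervalIntegral.integral_congr
        intro γ hγ
        rw [Set.uIcc_of_le hφφ'.le] at hγ
        show f γ * (1 - OmegaTilde n P r γ) = f γ
        rw [hOm3 γ (by linarith [hγ.1])]; ring
      have hFd2 : (∫ t in (0:ℝ)..φ', f t) - (∫ t in (0:ℝ)..φ, f t) = ∫ γ in φ..φ', f γ :=
        intervalIntegral.integral_interval_sub_left (hif 0 φ') (hif 0 φ)
      rw [hL, hu2, hu3, hmax2, hFd2]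
      ring
  · -- φ' < a + d : everything left of Δ₁
    push_neg at hc1
    have hu1 : ustep (φ' - (a + d)) = 0 := hust0 _ (by linarith)
    have hu3 : ustep (φ' - (a - d)) = 0 := hust0 _ (by linarith)
    have hL : (∫ γ in φ..φ', f γ * (1 - OmegaTilde n P r γ)) = 0 := by
      rw [intervalIntegral.integral_congr (g := fun _ => (0:ℝ)) ?_,
        intervalIntegral.integral_zero]
      intro γ hγ
      rw [Set.uIcc_of_le hφφ'.le] at hγ
      show f γ * (1 - OmegaTilde n P r γ) = 0
      rw [hOm1 γ (by linarith [hγ.2])]; ring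
    rw [hL, hu1, hu3]
    ring
end
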